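/- arXiv:1204.5672 — 2 statements merged into one kernel-verified Lean document; each statement's English description precedes it below -/
import Mathlib

section
/- Let M1 *_N M2 be a special amalgam such that M1 and M2 are cancellative and N has the confluence property in both M1 and M2. Then the monoid M1 *_N M2 is cancellative. -/
namespace PG

variable {M : Type*} [Monoid M]

/-- `LDvd a b` : `a` left-divides `b`. -/
def LDvd (a b : M) : Prop := ∃ c, b = a * c

/-- `RDvd a b` : `a` right-divides `b`. -/
def RDvd (a b : M) : Prop := ∃ c, b = c * a

/-- A monoid is cancellative if `c * a * d = c * b * d` implies `a = b`. -/
def IsCancellative (M : Type*) [Monoid M] : Prop :=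
  ∀ a b c d : M, c * a * d = c * b * d → a = b

/-- A monoid is atomic if it admits a norm `ν : M → ℕ` with `ν a > 0` for `a ≠ 1`
and `ν (a * b) ≥ ν a + ν b`. -/
def IsAtomicMon (M : Type*) [Monoid M] : Prop :=
  ∃ ν : M → ℕ, (∀ a : M, a ≠ 1 → 0 < ν a) ∧ ∀ a b : M, ν a + ν b ≤ ν (a * b)

/-- `m` is the least common multiple of `a` and `b` for left-divisibility. -/
def IsLcmL (a b m : M) : Prop :=
  LDvd a m ∧ LDvd b m ∧ ∀ c : M, LDvd a c → LDvd b c → LDvd m c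

/-- `m` is the least common multiple of `a` and `b` for right-divisibility. -/
def IsLcmR (a b m : M) : Prop :=
  RDvd a m ∧ RDvd b m ∧ ∀ c : M, RDvd a c → RDvd b c → RDvd m c

/-- `d` is the greatest common left-divisor of `a` and `b`. -/
def IsGcdL (a b d : M) : Prop :=
  LDvd d a ∧ LDvd d b ∧ ∀ c : M, LDvd c a → LDvd c b → LDvd c d

/-- `d` is the greatest common right-divisor of `a` and `b`. -/
def IsGcdR (a b d : M) : Prop :=
  RDvd d a ∧ RDvd d b ∧ ∀ c : M, RDvd c a → RDvd c b → RDvd c d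

/-- A preGarside monoid: cancellative, atomic, and any two elements admitting a
common multiple (on the appropriate side) admit a least one. -/
def IsPreGarside (M : Type*) [Monoid M] : Prop :=
  IsCancellative M ∧ IsAtomicMon M ∧
    (∀ a b : M, (∃ c, LDvd a c ∧ LDvd b c) → ∃ m, IsLcmL a b m) ∧
    (∀ a b : M, (∃ c, RDvd a c ∧ RDvd b c) → ∃ m, IsLcmR a b m)

/-- A submonoid is special if it is closed under factors. -/
def IsSpecial (N : Submonoid M) : Prop := ∀ a b : M, a * b ∈ N → a ∈ N ∧ b ∈ N

/-- A (standard) parabolic submonoid: special and closed under all existing lcms. -/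
def IsParabolic (N : Submonoid M) : Prop :=
  IsSpecial N ∧ (∀ a b m : M, a ∈ N → b ∈ N → IsLcmL a b m → m ∈ N) ∧
    ∀ a b m : M, a ∈ N → b ∈ N → IsLcmR a b m → m ∈ N

/-- `b` is a factor of `a`. -/
def Factor (b a : M) : Prop := ∃ c d : M, a = c * b * d

/-- The set of factors of `a`. -/
def Factors (a : M) : Set M := {b | Factor b a}

/-- An element is balanced when its left-divisors and right-divisors coincide. -/
def IsBalanced (a : M) : Prop := {b : M | LDvd b a} = {b : M | RDvd b a}

/-- A Garside element: balanced, and its factors generate the monoid. -/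
def IsGarsideElt (Δ : M) : Prop := IsBalanced Δ ∧ Submonoid.closure (Factors Δ) = ⊤

/-- A Garside monoid: a preGarside monoid possessing a Garside element. -/
def IsGarside (M : Type*) [Monoid M] : Prop := IsPreGarside M ∧ ∃ Δ : M, IsGarsideElt Δ

/-- The factors of `a` computed inside the submonoid `N`. -/
def FactorsIn (N : Submonoid M) (a : M) : Set M :=
  {b | b ∈ N ∧ ∃ c ∈ N, ∃ d ∈ N, a = c * b * d}

/-- `Δ` is a Garside element of the submonoid `N`: it is balanced in `N` and its
factors in `N` generate `N`. -/
def IsGarsideEltIn (N : Submonoid M) (Δ : M) : Prop :=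
  Δ ∈ N ∧ ({b : M | b ∈ N ∧ ∃ c ∈ N, Δ = b * c} = {b : M | b ∈ N ∧ ∃ c ∈ N, Δ = c * b}) ∧
    Submonoid.closure (FactorsIn N Δ) = N

/-- The right coset `g * N` (an `R_N`-class). -/
def RCoset (N : Submonoid M) (g : M) : Set M := {x | ∃ h ∈ N, x = g * h}

/-- The left coset `N * g` (an `L_N`-class). -/
def LCoset (N : Submonoid M) (g : M) : Set M := {x | ∃ h ∈ N, x = h * g}

/-- `RReduces N B A` : the `R_N`-class `B` reduces in one step to the `R_N`-class `A`,
i.e. `A = g₁ N`, `B = g₂ N` with `g₂ ∈ g₁ N` and `g₁ ∉ g₂ N`. -/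
def RReduces (N : Submonoid M) (B A : Set M) : Prop :=
  ∃ g₁ g₂ : M, A = RCoset N g₁ ∧ B = RCoset N g₂ ∧ g₂ ∈ RCoset N g₁ ∧ g₁ ∉ RCoset N g₂

/-- `LReduces N B A` : the `L_N`-class `B` reduces in one step to the `L_N`-class `A`. -/
def LReduces (N : Submonoid M) (B A : Set M) : Prop :=
  ∃ g₁ g₂ : M, A = LCoset N g₁ ∧ B = LCoset N g₂ ∧ g₂ ∈ LCoset N g₁ ∧ g₁ ∉ LCoset N g₂

/-- `N` has the `R` confluence property: the reduction rule on `R_N`-classes is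
Noetherian and locally confluent. -/
def RConfluence (N : Submonoid M) : Prop :=
  (¬ ∃ f : ℕ → Set M, ∀ n : ℕ, RReduces N (f n) (f (n + 1))) ∧
    ∀ C A B : Set M, RReduces N C A → RReduces N C B →
      ∃ D : Set M, Relation.ReflTransGen (RReduces N) A D ∧
        Relation.ReflTransGen (RReduces N) B D

/-- `N` has the `L` confluence property. -/
def LConfluence (N : Submonoid M) : Prop :=
  (¬ ∃ f : ℕ → Set M, ∀ n : ℕ, LReduces N (f n) (f (n + 1))) ∧
    ∀ C A B : Set M, LReduces N C A → LReduces N C B →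
      ∃ D : Set M, Relation.ReflTransGen (LReduces N) A D ∧
        Relation.ReflTransGen (LReduces N) B D

/-- `N` has the confluence property. -/
def Confluence (N : Submonoid M) : Prop := RConfluence N ∧ LConfluence N

/-- The `R_N`-class `C` is minimal: whenever `g` represents `C` and `g = g' * h` with
`h ∈ N`, one has `g' N = C`. -/
def IsMinimalRCoset (N : Submonoid M) (C : Set M) : Prop :=
  (∃ g : M, C = RCoset N g) ∧
    ∀ g g' h : M, h ∈ N → C = RCoset N g → g = g' * h → RCoset N g' = C

/-- The `L_N`-class `C` is minimal. -/
def IsMinimalLCoset (N : Submonoid M) (C : Set M) : Prop :=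
  (∃ g : M, C = LCoset N g) ∧
    ∀ g g' h : M, h ∈ N → C = LCoset N g → g = h * g' → LCoset N g' = C

/-- The set of atoms of `M`. -/
def AtomSet (M : Type*) [Monoid M] : Set M :=
  {a | a ≠ 1 ∧ ∀ b c : M, a = b * c → b = 1 ∨ c = 1}

/-- `|x|` : the least number of factors of `Δ` needed to write `x` as a product. -/
noncomputable def lenFactors (Δ x : M) : ℕ :=
  sInf {k | ∃ l : List M, l.length = k ∧ (∀ y ∈ l, y ∈ Factors Δ) ∧ l.prod = x}

section Amalgam

variable {M₁ M₂ N : Type*} [Monoid M₁] [Monoid M₂] [Monoid N]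

/-- The congruence on the free product `M₁ ∗ M₂` identifying `ι₁ h` with `ι₂ h`
for every `h ∈ N`. -/
def amalgamCon (ι₁ : N →* M₁) (ι₂ : N →* M₂) : Con (Monoid.Coprod M₁ M₂) :=
  conGen fun a b => ∃ h : N, a = Monoid.Coprod.inl (ι₁ h) ∧ b = Monoid.Coprod.inr (ι₂ h)

/-- The amalgamated product `M₁ *_N M₂` : the pushout of `ι₁ : N →* M₁` and
`ι₂ : N →* M₂` in the category of monoids. -/
def Amalgam (ι₁ : N →* M₁) (ι₂ : N →* M₂) : Type _ := (amalgamCon ι₁ ι₂).Quotient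

instance (ι₁ : N →* M₁) (ι₂ : N →* M₂) : Monoid (Amalgam ι₁ ι₂) :=
  inferInstanceAs (Monoid (amalgamCon ι₁ ι₂).Quotient)

/-- The canonical morphism `M₁ →* M₁ *_N M₂`. -/
def amalgamInl (ι₁ : N →* M₁) (ι₂ : N →* M₂) : M₁ →* Amalgam ι₁ ι₂ :=
  (amalgamCon ι₁ ι₂).mk'.comp Monoid.Coprod.inl

/-- The canonical morphism `M₂ →* M₁ *_N M₂`. -/
def amalgamInr (ι₁ : N →* M₁) (ι₂ : N →* M₂) : M₂ →* Amalgam ι₁ ι₂ :=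
  (amalgamCon ι₁ ι₂).mk'.comp Monoid.Coprod.inr

end Amalgam

/-!
The amalgam acts on normal forms `n · c₁ ⋯ cₖ` (`n ∈ N`, the `cᵢ` nontrivial, alternately from
`M₁` and `M₂`, and taken from fixed sets of representatives of the classes `N g`): `g ∈ Mᵢ`
multiplies the leading `Mᵢ`-part `ι n * c₁` (or `ι n`) and renormalises it. Each element acts
injectively since `M₁` and `M₂` are left cancellative, and the orbit of the empty word recovers the
element, so `M₁ *_N M₂` is left cancellative. The representatives exist because, by Newman's lemma,
the `L` confluence property makes every `L_N`-class lie below a unique maximal one, and specialness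
makes `N` maximal. Right cancellativity is the same statement for the opposite monoids.
-/

section Rewriting

open Relation

variable {α : Type*} {r : α → α → Prop}

/-- Newman's lemma. -/
theorem _root_.Relation.join_of_locallyConfluent (wf : WellFounded (flip r))
    (lc : ∀ a b c, r a b → r a c → Join (ReflTransGen r) b c) {a b c : α}
    (hab : ReflTransGen r a b) (hac : ReflTransGen r a c) : Join (ReflTransGen r) b c := by
  induction a using wf.induction generalizing b c with
  | _ a ih =>
    rcases hab.cases_head with rfl | ⟨b₁, hab₁, hb₁b⟩
    · exact ⟨c, hac, .refl⟩
    rcases hac.cases_head with rfl | ⟨c₁, hac₁, hc₁c⟩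
    · exact ⟨b, .refl, hab⟩
    obtain ⟨d, hb₁d, hc₁d⟩ := lc a b₁ c₁ hab₁ hac₁
    obtain ⟨e, hbe, hde⟩ := ih b₁ hab₁ hb₁b hb₁d
    obtain ⟨f, hef, hcf⟩ := ih c₁ hac₁ (hc₁d.trans hde) hc₁c
    exact ⟨f, hbe.trans hef, hcf⟩

theorem _root_.Relation.ReflTransGen.eq_of_forall_not_rel {a b : α} (hab : ReflTransGen r a b)
    (ha : ∀ c, ¬ r a c) : a = b :=
  hab.cases_head.resolve_right fun ⟨c, hac, _⟩ => ha c hac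

theorem _root_.Relation.exists_reflTransGen_forall_not_rel (wf : WellFounded (flip r)) (a : α) :
    ∃ b, ReflTransGen r a b ∧ ∀ c, ¬ r b c := by
  obtain ⟨b, hab, hmin⟩ := wf.has_min {b | ReflTransGen r a b} ⟨a, .refl⟩
  exact ⟨b, hab, fun c hbc => hmin c (hab.tail hbc) hbc⟩

theorem _root_.Relation.eq_of_reflTransGen_of_forall_not_rel (wf : WellFounded (flip r))
    (lc : ∀ a b c, r a b → r a c → Join (ReflTransGen r) b c) {a b c : α}
    (hab : ReflTransGen r a b) (hac : ReflTransGen r a c)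
    (hb : ∀ d, ¬ r b d) (hc : ∀ d, ¬ r c d) : b = c := by
  obtain ⟨d, hbd, hcd⟩ := join_of_locallyConfluent wf lc hab hac
  rw [hbd.eq_of_forall_not_rel hb, hcd.eq_of_forall_not_rel hc]

end Rewriting

section Cosets

variable {M : Type*} [Monoid M] {P : Submonoid M}

open Relation

theorem mem_lCoset_self (g : M) : g ∈ LCoset P g := ⟨1, P.one_mem, (one_mul g).symm⟩

theorem lCoset_subset_iff {a b : M} : LCoset P a ⊆ LCoset P b ↔ a ∈ LCoset P b := by
  refine ⟨fun h => h (mem_lCoset_self a), ?_⟩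
  rintro ⟨h, hh, rfl⟩ x ⟨k, hk, rfl⟩
  exact ⟨k * h, P.mul_mem hk hh, (mul_assoc _ _ _).symm⟩

theorem LReduces.subset {B A : Set M} (h : LReduces P B A) : B ⊆ A := by
  obtain ⟨g₁, g₂, rfl, rfl, hg, -⟩ := h
  exact lCoset_subset_iff.2 hg

theorem lReduces_of_ssubset {a b : M} (h : LCoset P b ⊂ LCoset P a) :
    LReduces P (LCoset P b) (LCoset P a) :=
  ⟨a, b, rfl, rfl, lCoset_subset_iff.1 h.1, fun ha => h.2 (lCoset_subset_iff.2 ha)⟩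

theorem subset_of_reflTransGen_lReduces {B A : Set M} (h : ReflTransGen (LReduces P) B A) :
    B ⊆ A := by
  induction h with
  | refl => exact subset_rfl
  | tail _ hCA ih => exact ih.trans hCA.subset

theorem exists_eq_lCoset_of_reflTransGen {g : M} {A : Set M}
    (h : ReflTransGen (LReduces P) (LCoset P g) A) : ∃ a, A = LCoset P a := by
  rcases h.cases_tail with rfl | ⟨C, -, g₁, -, rfl, -⟩
  · exact ⟨g, rfl⟩
  · exact ⟨g₁, rfl⟩

theorem reflTransGen_lReduces_mul {h : M} (hh : h ∈ P) (g : M) :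
    ReflTransGen (LReduces P) (LCoset P (h * g)) (LCoset P g) := by
  rcases (lCoset_subset_iff.2 ⟨h, hh, rfl⟩ : LCoset P (h * g) ⊆ LCoset P g).eq_or_ssubset with
    heq | hlt
  · rw [heq]
  · exact .single (lReduces_of_ssubset hlt)

theorem IsSpecial.not_lReduces_one (hs : IsSpecial P) (A : Set M) :
    ¬ LReduces P (LCoset P 1) A := by
  rintro ⟨g₁, g₂, rfl, hB, hg, hg₁⟩
  obtain ⟨h, hh, h1⟩ := (hB ▸ lCoset_subset_iff.2 hg : LCoset P 1 ⊆ LCoset P g₁)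
    (mem_lCoset_self 1)
  exact hg₁ (hB ▸ ⟨g₁, (hs h g₁ (h1 ▸ P.one_mem)).2, (mul_one g₁).symm⟩)

/-- `rep g` represents the unique maximal `L_N`-class reachable from `N g` (Newman's lemma);
specialness makes `N` itself maximal, so it is represented by `1`. -/
theorem exists_lCoset_rep (hs : IsSpecial P) (hconf : LConfluence P) :
    ∃ rep : M → M, (∀ g, g ∈ LCoset P (rep g)) ∧ (∀ h ∈ P, ∀ g, rep (h * g) = rep g) ∧
      rep 1 = 1 := by
  classical
  have wf : WellFounded (flip (LReduces P)) :=
    wellFounded_iff_isEmpty_descending_chain.2 ⟨fun f => hconf.1 ⟨f.1, f.2⟩⟩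
  choose top htop hterm using fun g : M => exists_reflTransGen_forall_not_rel wf (LCoset P g)
  have top_eq {g : M} {C : Set M} (hC : ReflTransGen (LReduces P) (LCoset P g) C)
      (hCt : ∀ D, ¬ LReduces P C D) : top g = C :=
    eq_of_reflTransGen_of_forall_not_rel wf hconf.2 (htop g) hC (hterm g) hCt
  have top_mul (h : M) (hh : h ∈ P) (g : M) : top (h * g) = top g :=
    top_eq ((reflTransGen_lReduces_mul hh g).trans (htop g)) (hterm g)
  have top_one : top 1 = LCoset P 1 := top_eq .refl hs.not_lReduces_one
  refine ⟨fun g => if top g = LCoset P 1 then 1 else Classical.epsilon (top g = LCoset P ·),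
    fun g => ?_, fun h hh g => ?_, ?_⟩
  · have hg : g ∈ top g := subset_of_reflTransGen_lReduces (htop g) (mem_lCoset_self g)
    dsimp only
    split_ifs with h1
    · rwa [← h1]
    · rwa [← Classical.epsilon_spec (exists_eq_lCoset_of_reflTransGen (htop g))]
  · simp only [top_mul h hh g]
  · simp only [top_one, if_true]

end Cosets

section Transversal

variable {M N : Type*} [Monoid M] [Monoid N]

/-- Representatives `rep g` for the equivalence generated by `g ~ ι n * g`, such that every `g`
is uniquely of the form `ι n * rep g`. -/
structure LTransversal (ι : N →* M) where
  rep : M → M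
  coeff : M → N
  iota_coeff_mul_rep (g : M) : ι (coeff g) * rep g = g
  rep_iota_mul (n : N) (g : M) : rep (ι n * g) = rep g
  rep_one : rep 1 = 1
  coeff_iota_mul_rep (n : N) (g : M) : coeff (ι n * rep g) = n

namespace LTransversal

variable {ι : N →* M} (d : LTransversal ι)

theorem rep_rep (g : M) : d.rep (d.rep g) = d.rep g := by
  conv_rhs => rw [← d.iota_coeff_mul_rep g, d.rep_iota_mul]

def IsSyllable (c : M) : Prop := d.rep c = c ∧ c ≠ 1

theorem nonempty [IsRightCancelMul M] (hι : Function.Injective ι)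
    (hs : IsSpecial (MonoidHom.mrange ι)) (hconf : LConfluence (MonoidHom.mrange ι)) :
    Nonempty (LTransversal ι) := by
  obtain ⟨rep, hrep, rep_mul, rep_one⟩ := exists_lCoset_rep hs hconf
  have rep_iota_mul (n : N) (g : M) : rep (ι n * g) = rep g := rep_mul _ ⟨n, rfl⟩ g
  have : ∀ g, ∃ n, ι n * rep g = g := fun g => by
    obtain ⟨_, ⟨n, rfl⟩, hg⟩ := hrep g
    exact ⟨n, hg.symm⟩
  choose coeff hcoeff using this
  refine ⟨⟨rep, coeff, hcoeff, rep_iota_mul, rep_one, fun n g => hι ?_⟩⟩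
  have rep_rep : rep (rep g) = rep g := by conv_rhs => rw [← hcoeff g, rep_iota_mul]
  have h := hcoeff (ι n * rep g)
  rw [rep_iota_mul, rep_rep] at h
  exact mul_right_cancel h

end LTransversal

end Transversal

section Opposite

variable {M N : Type*} [Monoid M] [Monoid N]

open MulOpposite

theorem mrange_op (ι : N →* M) : MonoidHom.mrange (MonoidHom.op ι) = (MonoidHom.mrange ι).op := by
  ext x
  simp [Submonoid.mem_op, ← unop_inj]

theorem IsSpecial.op {P : Submonoid M} (hs : IsSpecial P) : IsSpecial P.op :=
  fun a b hab => (hs b.unop a.unop hab).symm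

theorem lCoset_op (P : Submonoid M) (g : Mᵐᵒᵖ) :
    LCoset P.op g = unop ⁻¹' RCoset P g.unop := by
  ext x
  constructor
  · rintro ⟨h, hh, rfl⟩
    exact ⟨h.unop, hh, rfl⟩
  · rintro ⟨h, hh, hx⟩
    exact ⟨op h, hh, congrArg op hx⟩

theorem lReduces_op_iff {P : Submonoid M} {B A : Set M} :
    LReduces P.op (unop ⁻¹' B) (unop ⁻¹' A) ↔ RReduces P B A := by
  have preimage_inj : Function.Injective (unop ⁻¹' · : Set M → Set Mᵐᵒᵖ) :=
    Set.preimage_injective.2 unop_surjective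
  constructor
  · rintro ⟨g₁, g₂, hA, hB, hg₂, hg₁⟩
    rw [lCoset_op] at hA hB hg₂ hg₁
    exact ⟨g₁.unop, g₂.unop, preimage_inj hA, preimage_inj hB, hg₂, hg₁⟩
  · rintro ⟨g₁, g₂, rfl, rfl, hg₂, hg₁⟩
    refine ⟨op g₁, op g₂, (lCoset_op P _).symm, (lCoset_op P _).symm, ?_, ?_⟩ <;>
      rwa [lCoset_op]

theorem RConfluence.op {P : Submonoid M} (h : RConfluence P) : LConfluence P.op := by
  let e : Set M ≃ Set Mᵐᵒᵖ := ⟨(unop ⁻¹' ·), (MulOpposite.op ⁻¹' ·), fun _ => rfl, fun _ => rfl⟩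
  have key (B A : Set Mᵐᵒᵖ) : LReduces P.op B A ↔ RReduces P (e.symm B) (e.symm A) :=
    lReduces_op_iff (B := e.symm B) (A := e.symm A)
  refine ⟨fun ⟨f, hf⟩ => h.1 ⟨fun n => e.symm (f n), fun n => (key _ _).1 (hf n)⟩, ?_⟩
  intro C A B hA hB
  obtain ⟨D, hAD, hBD⟩ := h.2 _ _ _ ((key C A).1 hA) ((key C B).1 hB)
  exact ⟨e D, hAD.lift e fun _ _ => lReduces_op_iff.2, hBD.lift e fun _ _ => lReduces_op_iff.2⟩

theorem LTransversal.nonempty_op [IsLeftCancelMul M] {ι : N →* M} (hι : Function.Injective ι)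
    (hs : IsSpecial (MonoidHom.mrange ι)) (hconf : RConfluence (MonoidHom.mrange ι)) :
    Nonempty (LTransversal (MonoidHom.op ι)) := by
  refine LTransversal.nonempty (fun a b h => unop_injective (hι (op_injective h))) ?_ ?_
  · rw [mrange_op]; exact hs.op
  · rw [mrange_op]; exact hconf.op

end Opposite

section Words

variable {M X : Type*} [Monoid M]

def splitHead : List (M ⊕ X) → M × List (M ⊕ X)
  | [] => (1, [])
  | Sum.inl c :: t => (c, t)
  | Sum.inr x :: t => (1, Sum.inr x :: t)

open Classical in
noncomputable def consHead (c : M) (t : List (M ⊕ X)) : List (M ⊕ X) :=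
  if c = 1 then t else Sum.inl c :: t

def Reduced (p : M → Prop) (q : X → Prop) (l : List (M ⊕ X)) : Prop :=
  l.IsChain (fun a b => a.isLeft ≠ b.isLeft) ∧ ∀ s ∈ l, Sum.elim p q s

variable {p : M → Prop} {q : X → Prop}

theorem reduced_map_swap {l : List (M ⊕ X)} : Reduced q p (l.map Sum.swap) ↔ Reduced p q l := by
  have isRight_eq_iff (a b : M ⊕ X) : a.isRight = b.isRight ↔ a.isLeft = b.isLeft := by
    cases a <;> cases b <;> simp
  simp [Reduced, List.isChain_map, isRight_eq_iff, and_comm]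

theorem reduced_splitHead {l : List (M ⊕ X)} (h : Reduced p q l) :
    Reduced p q (splitHead l).2 ∧ ∀ s ∈ (splitHead l).2.head?, s.isRight := by
  match l, h with
  | [], _ => simp [splitHead, Reduced]
  | Sum.inl c :: t, ⟨hchain, hsyl⟩ =>
    rw [List.isChain_cons] at hchain
    refine ⟨⟨hchain.2, fun s hs => hsyl s (List.mem_cons_of_mem _ hs)⟩, fun s hs => ?_⟩
    simpa using hchain.1 s hs
  | Sum.inr x :: t, h => exact ⟨h, by simp [splitHead]⟩

theorem reduced_consHead {c : M} {t : List (M ⊕ X)} (hc : c ≠ 1 → p c) (ht : Reduced p q t)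
    (ht' : ∀ s ∈ t.head?, s.isRight) : Reduced p q (consHead c t) := by
  unfold consHead
  split_ifs with h1
  · exact ht
  · refine ⟨List.isChain_cons.2 ⟨fun s hs => by simpa using ht' s hs, ht.1⟩, ?_⟩
    rintro s (_ | ⟨_, hs⟩)
    exacts [hc h1, ht.2 s hs]

theorem splitHead_consHead (c : M) {t : List (M ⊕ X)} (ht : ∀ s ∈ t.head?, s.isRight) :
    splitHead (consHead c t) = (c, t) := by
  unfold consHead
  split_ifs with h1
  · match t, ht with
    | [], _ => simp [splitHead, h1]
    | Sum.inr x :: t, _ => simp [splitHead, h1]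
    | Sum.inl c :: t, ht => simp at ht
  · rfl

theorem prod_map_splitHead {Q : Type*} [Monoid Q] (φ : M →* Q) (ψ : X → Q) (l : List (M ⊕ X)) :
    (l.map (Sum.elim φ ψ)).prod =
      φ (splitHead l).1 * ((splitHead l).2.map (Sum.elim φ ψ)).prod := by
  match l with
  | [] | Sum.inl c :: t | Sum.inr x :: t => simp [splitHead]

end Words

namespace LTransversal

variable {M N X : Type*} [Monoid M] [Monoid N] {ι : N →* M} (d : LTransversal ι)
  {q : X → Prop}

theorem rep_splitHead {l : List (M ⊕ X)} (h : Reduced d.IsSyllable q l) :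
    d.rep (splitHead l).1 = (splitHead l).1 := by
  match l, h with
  | [], _ | Sum.inr _ :: _, _ => exact d.rep_one
  | Sum.inl c :: t, h => exact (h.2 (Sum.inl c) List.mem_cons_self).1

theorem consHead_splitHead {l : List (M ⊕ X)} (h : Reduced d.IsSyllable q l) :
    consHead (splitHead l).1 (splitHead l).2 = l := by
  match l, h with
  | [], _ | Sum.inr _ :: _, _ => simp [consHead, splitHead]
  | Sum.inl c :: t, h => simp [consHead, splitHead, (h.2 (Sum.inl c) List.mem_cons_self).2]

variable (q) in
noncomputable def wordEquiv :
    {w : N × List (M ⊕ X) // Reduced d.IsSyllable q w.2} ≃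
      M × {t : List (M ⊕ X) // Reduced d.IsSyllable q t ∧ ∀ s ∈ t.head?, s.isRight} where
  toFun w := (ι w.1.1 * (splitHead w.1.2).1, ⟨(splitHead w.1.2).2, reduced_splitHead w.2⟩)
  invFun x := ⟨(d.coeff x.1, consHead (d.rep x.1) x.2.1),
    reduced_consHead (fun h => ⟨d.rep_rep x.1, h⟩) x.2.2.1 x.2.2.2⟩
  left_inv := by
    rintro ⟨⟨n, l⟩, h⟩
    have hc : d.rep (splitHead l).1 = (splitHead l).1 := d.rep_splitHead h
    ext <;> dsimp only
    · conv_lhs => rw [← hc, d.coeff_iota_mul_rep]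
    · simp only [d.rep_iota_mul, hc, d.consHead_splitHead h]
  right_inv := by
    rintro ⟨m, t, ht, ht'⟩
    simp only [splitHead_consHead _ ht', d.iota_coeff_mul_rep]

theorem wordEquiv_shift (ν : N) (w : {w : N × List (M ⊕ X) // Reduced d.IsSyllable q w.2}) :
    d.wordEquiv q ⟨(ν * w.1.1, w.1.2), w.2⟩ = (ι ν * (d.wordEquiv q w).1, (d.wordEquiv q w).2) := by
  simp [wordEquiv, mul_assoc]

end LTransversal

section ProdMulLeftEnd

variable {M W T : Type*} [Monoid M]

def prodMulLeftEnd (e : W ≃ M × T) : M →* Function.End W where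
  toFun g w := e.symm (g * (e w).1, (e w).2)
  map_one' := funext fun w => by simp; rfl
  map_mul' g g' := funext fun w => by
    change _ = e.symm (g * (e (e.symm (g' * (e w).1, (e w).2))).1,
      (e (e.symm (g' * (e w).1, (e w).2))).2)
    simp [mul_assoc]

theorem prodMulLeftEnd_apply (e : W ≃ M × T) (g : M) (w : W) :
    prodMulLeftEnd e g w = e.symm (g * (e w).1, (e w).2) := rfl

variable (e : W ≃ M × T)

theorem prodMulLeftEnd_injective [IsLeftCancelMul M] (g : M) :
    Function.Injective (prodMulLeftEnd e g) :=
  e.symm.injective.comp (((mul_right_injective g).prodMap Function.injective_id).comp e.injective)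

theorem prodMulLeftEnd_eq {g : M} {f : W → W} (h : ∀ w, e (f w) = (g * (e w).1, (e w).2)) :
    prodMulLeftEnd e g = f :=
  funext fun w => e.symm_apply_eq.2 (h w).symm

theorem apply_prodMulLeftEnd_of_eq_mul {Q : Type*} [Monoid Q] (φ : M →* Q) (τ : T → Q)
    {v : W → Q} (hv : ∀ w, v w = φ (e w).1 * τ (e w).2) (g : M) (w : W) :
    v (prodMulLeftEnd e g w) = φ g * v w := by
  simp only [prodMulLeftEnd_apply, hv, Equiv.apply_symm_apply, map_mul, mul_assoc]

end ProdMulLeftEnd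

namespace Amalgam

variable {M₁ M₂ N Q : Type*} [Monoid M₁] [Monoid M₂] [Monoid N] [Monoid Q]
  {ι₁ : N →* M₁} {ι₂ : N →* M₂}

theorem inl_iota (n : N) : amalgamInl ι₁ ι₂ (ι₁ n) = amalgamInr ι₁ ι₂ (ι₂ n) :=
  (amalgamCon ι₁ ι₂).eq.2 (ConGen.Rel.of _ _ ⟨n, rfl, rfl⟩)

def lift (f₁ : M₁ →* Q) (f₂ : M₂ →* Q) (h : f₁.comp ι₁ = f₂.comp ι₂) :
    Amalgam ι₁ ι₂ →* Q :=
  (amalgamCon ι₁ ι₂).lift (Monoid.Coprod.lift f₁ f₂) <| Con.conGen_le.2 <| by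
    rintro _ _ ⟨n, rfl, rfl⟩
    simpa [Con.ker_rel] using DFunLike.congr_fun h n

@[simp]
theorem lift_inl (f₁ : M₁ →* Q) (f₂ : M₂ →* Q) (h : f₁.comp ι₁ = f₂.comp ι₂) (m : M₁) :
    lift f₁ f₂ h (amalgamInl ι₁ ι₂ m) = f₁ m :=
  Monoid.Coprod.lift_apply_inl f₁ f₂ m

@[simp]
theorem lift_inr (f₁ : M₁ →* Q) (f₂ : M₂ →* Q) (h : f₁.comp ι₁ = f₂.comp ι₂) (m : M₂) :
    lift f₁ f₂ h (amalgamInr ι₁ ι₂ m) = f₂ m :=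
  Monoid.Coprod.lift_apply_inr f₁ f₂ m

@[elab_as_elim]
theorem induction_on {motive : Amalgam ι₁ ι₂ → Prop} (x : Amalgam ι₁ ι₂)
    (inl : ∀ m, motive (amalgamInl ι₁ ι₂ m)) (inr : ∀ m, motive (amalgamInr ι₁ ι₂ m))
    (mul : ∀ x y, motive x → motive y → motive (x * y)) : motive x :=
  Con.induction_on (c := amalgamCon ι₁ ι₂) x fun y =>
    Monoid.Coprod.induction_on (motive := fun y => motive ((amalgamCon ι₁ ι₂).mk' y)) y inl inr
      fun _ _ => mul _ _

end Amalgam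

theorem isLeftCancelMul_of_injective_action {Q W : Type*} [Monoid Q] (A : Q →* Function.End W)
    (hA : ∀ x, Function.Injective (A x)) (v : W → Q) (w₀ : W) (hv : ∀ x, v (A x w₀) = x) :
    IsLeftCancelMul Q where
  mul_left_cancel x a b hab := by
    have h := congrFun (congrArg A hab) w₀
    rw [map_mul, map_mul] at h
    rw [← hv a, ← hv b, hA x h]

section Cancel

variable {M₁ M₂ N : Type*} [Monoid M₁] [Monoid M₂] [Monoid N] {ι₁ : N →* M₁} {ι₂ : N →* M₂}

variable (ι₁ ι₂) in
def wordValue (w : N × List (M₁ ⊕ M₂)) : Amalgam ι₁ ι₂ :=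
  amalgamInl ι₁ ι₂ (ι₁ w.1) * (w.2.map (Sum.elim (amalgamInl ι₁ ι₂) (amalgamInr ι₁ ι₂))).prod

variable (d₁ : LTransversal ι₁) (d₂ : LTransversal ι₂)

abbrev NormalWord := {w : N × List (M₁ ⊕ M₂) // Reduced d₁.IsSyllable d₂.IsSyllable w.2}

def NormalWord.shift (ν : N) (w : NormalWord d₁ d₂) : NormalWord d₁ d₂ := ⟨(ν * w.1.1, w.1.2), w.2⟩

noncomputable def NormalWord.equivSwap :
    NormalWord d₁ d₂ ≃ {w : N × List (M₂ ⊕ M₁) // Reduced d₂.IsSyllable d₁.IsSyllable w.2} :=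
  ((Equiv.refl N).prodCongr (Equiv.listEquivOfEquiv (Equiv.sumComm M₁ M₂))).subtypeEquiv
    fun _ => reduced_map_swap.symm

/-- `M₁` acts on the leading `M₁`-part of a normal form and `M₂` on its leading `M₂`-part; this is
well defined because `ι₁ ν` and `ι₂ ν` both just multiply the `N`-coordinate by `ν`. -/
noncomputable def wordAction : Amalgam ι₁ ι₂ →* Function.End (NormalWord d₁ d₂) :=
  Amalgam.lift (prodMulLeftEnd (d₁.wordEquiv d₂.IsSyllable))
    (prodMulLeftEnd ((NormalWord.equivSwap d₁ d₂).trans (d₂.wordEquiv d₁.IsSyllable))) <|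
    MonoidHom.ext fun ν =>
      (prodMulLeftEnd_eq _ (f := NormalWord.shift d₁ d₂ ν) (d₁.wordEquiv_shift ν)).trans
        (prodMulLeftEnd_eq _ fun w => d₂.wordEquiv_shift ν (NormalWord.equivSwap d₁ d₂ w)).symm

theorem wordValue_wordAction (x : Amalgam ι₁ ι₂) (w : NormalWord d₁ d₂) :
    wordValue ι₁ ι₂ (wordAction d₁ d₂ x w).1 = x * wordValue ι₁ ι₂ w.1 := by
  induction x using Amalgam.induction_on generalizing w with
  | inl m =>
    rw [wordAction, Amalgam.lift_inl]
    refine apply_prodMulLeftEnd_of_eq_mul (d₁.wordEquiv d₂.IsSyllable) (amalgamInl ι₁ ι₂)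
      (fun t => (t.1.map (Sum.elim (amalgamInl ι₁ ι₂) (amalgamInr ι₁ ι₂))).prod)
      (v := fun w => wordValue ι₁ ι₂ w.1) (fun w => ?_) m w
    rw [wordValue, prod_map_splitHead (amalgamInl ι₁ ι₂), ← mul_assoc, ← map_mul]
    rfl
  | inr m =>
    rw [wordAction, Amalgam.lift_inr]
    refine apply_prodMulLeftEnd_of_eq_mul
      ((NormalWord.equivSwap d₁ d₂).trans (d₂.wordEquiv d₁.IsSyllable)) (amalgamInr ι₁ ι₂)
      (fun t => (t.1.map (Sum.elim (amalgamInr ι₁ ι₂) (amalgamInl ι₁ ι₂))).prod)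
      (v := fun w => wordValue ι₁ ι₂ w.1) (fun w => ?_) m w
    have swap_eq : wordValue ι₁ ι₂ w.1 = amalgamInr ι₁ ι₂ (ι₂ w.1.1) *
        ((w.1.2.map Sum.swap).map (Sum.elim (amalgamInr ι₁ ι₂) (amalgamInl ι₁ ι₂))).prod := by
      simp [wordValue, Amalgam.inl_iota, Sum.elim_swap]
    rw [swap_eq, prod_map_splitHead (amalgamInr ι₁ ι₂), ← mul_assoc, ← map_mul]
    rfl
  | mul x y hx hy =>
    rw [map_mul, mul_assoc, ← hy, ← hx]
    rfl

theorem wordAction_injective [IsLeftCancelMul M₁] [IsLeftCancelMul M₂] (x : Amalgam ι₁ ι₂) :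
    Function.Injective (wordAction d₁ d₂ x) := by
  induction x using Amalgam.induction_on with
  | inl m => rw [wordAction, Amalgam.lift_inl]; exact prodMulLeftEnd_injective _ m
  | inr m => rw [wordAction, Amalgam.lift_inr]; exact prodMulLeftEnd_injective _ m
  | mul x y hx hy => rw [map_mul]; exact hx.comp hy

end Cancel

namespace Amalgam

variable {M₁ M₂ N : Type*} [Monoid M₁] [Monoid M₂] [Monoid N] {ι₁ : N →* M₁} {ι₂ : N →* M₂}

theorem isLeftCancelMul_of_lTransversal [IsLeftCancelMul M₁] [IsLeftCancelMul M₂]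
    (d₁ : LTransversal ι₁) (d₂ : LTransversal ι₂) : IsLeftCancelMul (Amalgam ι₁ ι₂) := by
  refine isLeftCancelMul_of_injective_action (wordAction d₁ d₂) (wordAction_injective d₁ d₂)
    (fun w => wordValue ι₁ ι₂ w.1) ⟨(1, []), List.isChain_nil, by simp⟩ fun x => ?_
  change wordValue ι₁ ι₂ _ = x
  rw [wordValue_wordAction]
  simp [wordValue]

open MulOpposite

def toOp : Amalgam ι₁ ι₂ →* (Amalgam (MonoidHom.op ι₁) (MonoidHom.op ι₂))ᵐᵒᵖ :=
  lift ((MonoidHom.op (amalgamInl _ _)).comp (MulEquiv.opOp M₁).toMonoidHom)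
    ((MonoidHom.op (amalgamInr _ _)).comp (MulEquiv.opOp M₂).toMonoidHom)
    (MonoidHom.ext fun n => congrArg op (inl_iota (op n)))

def ofOp : Amalgam (MonoidHom.op ι₁) (MonoidHom.op ι₂) →* (Amalgam ι₁ ι₂)ᵐᵒᵖ :=
  lift (MonoidHom.op (amalgamInl ι₁ ι₂)) (MonoidHom.op (amalgamInr ι₁ ι₂))
    (MonoidHom.ext fun n => congrArg op (inl_iota n.unop))

theorem unop_ofOp_unop_toOp (x : Amalgam ι₁ ι₂) : (ofOp (toOp x).unop).unop = x := by
  induction x using induction_on with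
  | inl m => simp [toOp, ofOp]
  | inr m => simp [toOp, ofOp]
  | mul x y hx hy => simp [hx, hy]

theorem toOp_injective : Function.Injective (toOp : Amalgam ι₁ ι₂ →* _) :=
  fun x y h => by rw [← unop_ofOp_unop_toOp x, ← unop_ofOp_unop_toOp y, h]

theorem isRightCancelMul_of_op [IsLeftCancelMul (Amalgam (MonoidHom.op ι₁) (MonoidHom.op ι₂))] :
    IsRightCancelMul (Amalgam ι₁ ι₂) :=
  toOp_injective.isRightCancelMul _ (map_mul toOp)

end Amalgam

theorem isCancellative_iff_isCancelMul {M : Type*} [Monoid M] :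
    IsCancellative M ↔ IsCancelMul M := by
  refine ⟨fun h => { mul_left_cancel a b c hbc := h b c a 1 (by simpa using hbc)
                     mul_right_cancel a b c hbc := h b c 1 a (by simpa using hbc) },
    fun _ _ _ _ _ habcd => mul_left_cancel (mul_right_cancel habcd)⟩

/-- **Corollary 3.7.** A special amalgam `M₁ *_N M₂` with `M₁, M₂` cancellative and `N`
having the confluence property in both is cancellative. -/
theorem corollary_3_7 {M₁ M₂ N : Type*} [Monoid M₁] [Monoid M₂] [Monoid N]
    (ι₁ : N →* M₁) (ι₂ : N →* M₂)
    (hι₁ : Function.Injective ι₁) (hι₂ : Function.Injective ι₂)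
    (hs₁ : IsSpecial (MonoidHom.mrange ι₁)) (hs₂ : IsSpecial (MonoidHom.mrange ι₂))
    (hc₁ : IsCancellative M₁) (hc₂ : IsCancellative M₂)
    (hconf₁ : Confluence (MonoidHom.mrange ι₁))
    (hconf₂ : Confluence (MonoidHom.mrange ι₂)) :
    IsCancellative (Amalgam ι₁ ι₂) := by
  have := isCancellative_iff_isCancelMul.1 hc₁
  have := isCancellative_iff_isCancelMul.1 hc₂
  obtain ⟨d₁⟩ := LTransversal.nonempty hι₁ hs₁ hconf₁.2
  obtain ⟨d₂⟩ := LTransversal.nonempty hι₂ hs₂ hconf₂.2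
  obtain ⟨d₁'⟩ := LTransversal.nonempty_op hι₁ hs₁ hconf₁.1
  obtain ⟨d₂'⟩ := LTransversal.nonempty_op hι₂ hs₂ hconf₂.1
  have := Amalgam.isLeftCancelMul_of_lTransversal d₁ d₂
  have := Amalgam.isLeftCancelMul_of_lTransversal d₁' d₂'
  have := Amalgam.isRightCancelMul_of_op (ι₁ := ι₁) (ι₂ := ι₂)
  exact isCancellative_iff_isCancelMul.2 {}

end PG
end

section
/- Let M be a Garside monoid with Garside element Δ, let N be a parabolic submonoid of M, and let Δ_N be the Garside element of N with Div(Δ_N) = Div(Δ) ∩ N. Let a, b ∈ M. Then: (1) the ⪯_L-increasing sequence (b ∧_L Δ_N^n)_{n≥0} stabilizes for n ≥ |b|; (2) the ⪯_R-increasing sequence (a ∧_R (Δ_N^n b))_{n≥0} stabilizes for n ≥ |a|. -/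
namespace PG

variable {M : Type*} [Monoid M]

/-!
Write `S` for the set of factors of `Δ`. Since `Δ` is balanced, `S` is the set of left divisors
of `Δ`, so it is closed under lcms and complements; from this, the lcm of any `x` with an element
of `S ^ k` is `x` times an element of `S ^ k`, and consequently every left or right divisor of an
element of `S ^ k` again lies in `S ^ k`.

If `c` left-divides both `b ∈ S ^ |b|` and `Δ_N ^ n`, then `c ∈ N` is a product of `|b|` factors
of `Δ` lying in `N`, i.e. of divisors of `Δ_N`. Conjugation by `Δ_N` permutes these divisors, so
such a product left-divides `Δ_N ^ |b|`. For the second sequence, a common right divisor `c` of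
`a` and `Δ_N ^ n * b` has right lcm `z * b` with `b`, where `z ∈ S ^ |a|`; as `z * b` right-divides
`Δ_N ^ n * b`, cancellation puts `z` in `N`, so `z` right-divides `Δ_N ^ |a|`.
-/

open MulOpposite Pointwise

section Divisibility

variable {A : Type*} [Monoid A]

theorem IsCancellative.isCancelMul (h : IsCancellative A) : IsCancelMul A where
  mul_left_cancel a b c hbc := h b c a 1 (by simpa only [mul_one] using hbc)
  mul_right_cancel a b c hbc := h b c 1 a (by simpa only [one_mul] using hbc)

theorem IsAtomicMon.subsingleton_units (h : IsAtomicMon A) : Subsingleton Aˣ := by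
  obtain ⟨ν, hpos, hmul⟩ := h
  have hν1 : ν 1 = 0 := by have := hmul 1 1; rw [mul_one] at this; omega
  refine Subsingleton.units_of_isUnit fun a ha => by_contra fun hne => ?_
  obtain ⟨b, hab⟩ := ha.exists_right_inv
  have hνab := hmul a b
  rw [hab, hν1] at hνab
  have := hpos a hne
  omega

theorem LDvd.trans {a b c : A} : LDvd a b → LDvd b c → LDvd a c
  | ⟨u, hu⟩, ⟨v, hv⟩ => ⟨u * v, by rw [hv, hu, mul_assoc]⟩

theorem RDvd.trans {a b c : A} : RDvd a b → RDvd b c → RDvd a c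
  | ⟨u, hu⟩, ⟨v, hv⟩ => ⟨v * u, by rw [hv, hu, mul_assoc]⟩

theorem ldvd_mul_right (a b : A) : LDvd a (a * b) := ⟨b, rfl⟩

theorem rdvd_mul_left (a b : A) : RDvd b (a * b) := ⟨a, rfl⟩

theorem LDvd.mul_left {a b : A} (c : A) : LDvd a b → LDvd (c * a) (c * b)
  | ⟨u, hu⟩ => ⟨u, by rw [hu, mul_assoc]⟩

theorem RDvd.mul_right {a b : A} (c : A) : RDvd a b → RDvd (a * c) (b * c)
  | ⟨u, hu⟩ => ⟨u, by rw [hu, mul_assoc]⟩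

theorem ldvd_pow_of_le (D : A) {k n : ℕ} (h : k ≤ n) : LDvd (D ^ k) (D ^ n) :=
  pow_dvd_pow D h

theorem rdvd_pow_of_le (D : A) {k n : ℕ} (h : k ≤ n) : RDvd (D ^ k) (D ^ n) :=
  ⟨D ^ (n - k), (pow_sub_mul_pow D h).symm⟩

theorem isGcdL_iff_of_ldvd_iff {a b b' d : A} (h : ∀ c, LDvd c a → (LDvd c b ↔ LDvd c b')) :
    IsGcdL a b d ↔ IsGcdL a b' d := by
  have key : ∀ {b b' : A}, (∀ c, LDvd c a → (LDvd c b ↔ LDvd c b')) →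
      IsGcdL a b d → IsGcdL a b' d :=
    fun h ⟨hda, hdb, hmax⟩ =>
      ⟨hda, (h d hda).1 hdb, fun c hca hcb => hmax c hca ((h c hca).2 hcb)⟩
  exact ⟨key h, key fun c hca => (h c hca).symm⟩

theorem isGcdR_iff_of_rdvd_iff {a b b' d : A} (h : ∀ c, RDvd c a → (RDvd c b ↔ RDvd c b')) :
    IsGcdR a b d ↔ IsGcdR a b' d := by
  have key : ∀ {b b' : A}, (∀ c, RDvd c a → (RDvd c b ↔ RDvd c b')) →
      IsGcdR a b d → IsGcdR a b' d :=
    fun h ⟨hda, hdb, hmax⟩ =>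
      ⟨hda, (h d hda).1 hdb, fun c hca hcb => hmax c hca ((h c hca).2 hcb)⟩
  exact ⟨key h, key fun c hca => (h c hca).symm⟩

theorem IsLcmL.symm {a b m : A} (h : IsLcmL a b m) : IsLcmL b a m :=
  ⟨h.2.1, h.1, fun c hb ha => h.2.2 c ha hb⟩

theorem IsLcmL.of_ldvd_iff {a b b' m : A} (h : IsLcmL a b m)
    (hb : ∀ c, LDvd a c → (LDvd b c ↔ LDvd b' c)) : IsLcmL a b' m :=
  ⟨h.1, (hb m h.1).1 h.2.1, fun c hac hbc => h.2.2 c hac ((hb c hac).2 hbc)⟩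

theorem IsLcmL.mul_left [IsLeftCancelMul A] {a b m : A} (h : IsLcmL a b m) (c : A) :
    IsLcmL (c * a) (c * b) (c * m) := by
  refine ⟨h.1.mul_left c, h.2.1.mul_left c, fun x ⟨u, hu⟩ ⟨v, hv⟩ => ?_⟩
  have hav : b * v = a * u := mul_left_cancel (by rw [← mul_assoc, ← hv, hu, mul_assoc])
  obtain ⟨w, hw⟩ := h.2.2 (a * u) (ldvd_mul_right a u) ⟨v, hav.symm⟩
  exact ⟨w, by rw [hu, mul_assoc, hw, mul_assoc]⟩

end Divisibility

def HasLcmsL (A : Type*) [Monoid A] : Prop :=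
  ∀ a b : A, (∃ c, LDvd a c ∧ LDvd b c) → ∃ m, IsLcmL a b m

def HasLcmsR (A : Type*) [Monoid A] : Prop :=
  ∀ a b : A, (∃ c, RDvd a c ∧ RDvd b c) → ∃ m, IsLcmR a b m

section Opposite

variable {A : Type*} [Monoid A]

theorem ldvd_op_iff {a b : A} : LDvd (op a) (op b) ↔ RDvd a b :=
  ⟨fun ⟨c, hc⟩ => ⟨unop c, op_injective (by rw [hc, op_mul, op_unop])⟩,
    fun ⟨c, hc⟩ => ⟨op c, by rw [hc, op_mul]⟩⟩

theorem rdvd_op_iff {a b : A} : RDvd (op a) (op b) ↔ LDvd a b :=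
  ⟨fun ⟨c, hc⟩ => ⟨unop c, op_injective (by rw [hc, op_mul, op_unop])⟩,
    fun ⟨c, hc⟩ => ⟨op c, by rw [hc, op_mul]⟩⟩

theorem isLcmL_op_iff {a b m : A} : IsLcmL (op a) (op b) (op m) ↔ IsLcmR a b m := by
  simp only [IsLcmL, IsLcmR, ldvd_op_iff, op_surjective.forall]

theorem HasLcmsR.op (h : HasLcmsR A) : HasLcmsL Aᵐᵒᵖ := by
  simp only [HasLcmsL, op_surjective.forall]
  rintro a b ⟨c, hac, hbc⟩
  rw [← op_unop c, ldvd_op_iff] at hac hbc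
  obtain ⟨m, hm⟩ := h a b ⟨unop c, hac, hbc⟩
  exact ⟨MulOpposite.op m, isLcmL_op_iff.2 hm⟩

instance subsingleton_units_op [Subsingleton Aˣ] : Subsingleton Aᵐᵒᵖˣ :=
  Subsingleton.units_of_isUnit fun _ ha => unop_injective ha.unop.eq_one

theorem factors_op (Δ : A) : Factors (op Δ) = unop ⁻¹' Factors Δ := by
  ext x
  refine ⟨fun ⟨c, d, h⟩ => ⟨unop d, unop c, ?_⟩, fun ⟨c, d, h⟩ => ⟨op d, op c, ?_⟩⟩
  · rw [← unop_op Δ, h]; simp only [unop_mul, mul_assoc]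
  · rw [← op_unop x, ← op_mul, ← op_mul, ← mul_assoc, ← h]

theorem IsBalanced.op {Δ : A} (h : IsBalanced Δ) : IsBalanced (op Δ) := by
  ext x
  rw [← op_unop x]
  exact (ldvd_op_iff.trans (Set.ext_iff.1 h (unop x)).symm).trans rdvd_op_iff.symm

theorem IsGarsideElt.op {Δ : A} (h : IsGarsideElt Δ) : IsGarsideElt (op Δ) :=
  ⟨h.1.op, by rw [factors_op, ← Submonoid.op_closure, h.2, Submonoid.op_top]⟩

theorem op_mem_pow_preimage_iff {S : Set A} {x : A} {k : ℕ} :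
    op x ∈ (unop ⁻¹' S) ^ k ↔ x ∈ S ^ k := by
  induction k generalizing x with
  | zero => simp
  | succ k ih =>
    rw [pow_succ, pow_succ', Set.mem_mul, Set.mem_mul, op_surjective.exists]
    simp only [op_surjective.exists, Set.mem_preimage, unop_op, ih, ← op_mul, op_inj]
    constructor
    · rintro ⟨y, hy, s, hs, rfl⟩; exact ⟨s, hs, y, hy, rfl⟩
    · rintro ⟨s, hs, y, hy, rfl⟩; exact ⟨y, hy, s, hs, rfl⟩

end Opposite

section Powers

variable {A : Type*} [Monoid A]

theorem mem_pow_iff_exists_list {S : Set A} {x : A} {k : ℕ} :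
    x ∈ S ^ k ↔ ∃ l : List A, l.length = k ∧ (∀ y ∈ l, y ∈ S) ∧ l.prod = x := by
  induction k generalizing x with
  | zero => simp [eq_comm]
  | succ k ih =>
    rw [pow_succ', Set.mem_mul]
    constructor
    · rintro ⟨s, hs, y, hy, rfl⟩
      obtain ⟨l, hl, hlS, rfl⟩ := ih.1 hy
      exact ⟨s :: l, by rw [List.length_cons, hl], List.forall_mem_cons.2 ⟨hs, hlS⟩,
        List.prod_cons⟩
    · rintro ⟨_ | ⟨s, l⟩, hl, hlS, rfl⟩
      · simp at hl
      · rw [List.forall_mem_cons] at hlS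
        exact ⟨s, hlS.1, l.prod, ih.2 ⟨l, by simpa using hl, hlS.2, rfl⟩, List.prod_cons.symm⟩

theorem mem_pow_lenFactors {Δ : A} (hΔ : Submonoid.closure (Factors Δ) = ⊤) (x : A) :
    x ∈ Factors Δ ^ lenFactors Δ x := by
  obtain ⟨l, hl, rfl⟩ := Submonoid.exists_list_of_mem_closure (hΔ ▸ Submonoid.mem_top x)
  rw [mem_pow_iff_exists_list]
  exact Nat.sInf_mem (s := {k | ∃ l' : List A, l'.length = k ∧ (∀ y ∈ l', y ∈ Factors Δ) ∧
    l'.prod = l.prod}) ⟨l.length, l, rfl, hl, rfl⟩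

end Powers

section Garside

variable {A : Type*} [Monoid A] {Δ : A}

theorem mem_factors_iff_ldvd (hΔ : IsBalanced Δ) {x : A} : x ∈ Factors Δ ↔ LDvd x Δ := by
  refine ⟨fun ⟨c, d, h⟩ => ?_, fun ⟨c, h⟩ => ⟨1, c, by rw [one_mul, h]⟩⟩
  obtain ⟨e, he⟩ := (Set.ext_iff.1 hΔ (c * x)).1 ⟨d, h⟩
  exact (Set.ext_iff.1 hΔ x).2 ⟨e * c, by rw [he, mul_assoc]⟩

theorem mem_factors_of_isLcmL_mul (hΔ : IsBalanced Δ) {a s t : A} (h : IsLcmL a s (a * t))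
    (ha : a ∈ Factors Δ) (hs : s ∈ Factors Δ) : t ∈ Factors Δ := by
  rw [mem_factors_iff_ldvd hΔ] at ha hs
  obtain ⟨w, hw⟩ := h.2.2 Δ ha hs
  exact ⟨a, w, hw⟩

theorem exists_isLcmL_mul_factor [IsLeftCancelMul A] (hlcm : HasLcmsL A) (hΔ : IsBalanced Δ)
    {j : ℕ} {x s : A} (hx : x ∈ Factors Δ ^ j) (hs : s ∈ Factors Δ)
    (hxs : ∃ c, LDvd x c ∧ LDvd s c) : ∃ q ∈ Factors Δ, IsLcmL x s (x * q) := by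
  induction j generalizing x s with
  | zero =>
    rw [pow_zero, Set.mem_one] at hx
    subst hx
    refine ⟨s, hs, ?_⟩
    rw [one_mul]
    exact ⟨⟨s, (one_mul s).symm⟩, ⟨1, (mul_one s).symm⟩, fun _ _ h => h⟩
  | succ j ih =>
    rw [pow_succ'] at hx
    obtain ⟨a, ha, y, hy, rfl⟩ := hx
    obtain ⟨c, ⟨u, rfl⟩, hsc⟩ := hxs
    have hac : LDvd a (a * y * u) := ⟨y * u, mul_assoc a y u⟩
    obtain ⟨m, hm⟩ := hlcm a s ⟨_, hac, hsc⟩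
    obtain ⟨t, rfl⟩ := hm.1
    obtain ⟨v, hv⟩ := hm.2.2 _ hac hsc
    have hyt : y * u = t * v := mul_left_cancel (by rw [← mul_assoc, hv, mul_assoc])
    obtain ⟨q, hq, hytq⟩ :=
      ih hy (mem_factors_of_isLcmL_mul hΔ hm ha hs) ⟨y * u, ⟨u, rfl⟩, ⟨v, hyt⟩⟩
    refine ⟨q, hq, ?_⟩
    rw [mul_assoc]
    exact (hytq.mul_left a).of_ldvd_iff fun c hc =>
      ⟨hm.2.1.trans, hm.2.2 c ((ldvd_mul_right a y).trans hc)⟩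

theorem exists_isLcmL_mul_of_mem_pow [IsLeftCancelMul A] (hlcm : HasLcmsL A)
    (hΔ : IsGarsideElt Δ) {k : ℕ} {x y : A} (hy : y ∈ Factors Δ ^ k)
    (hxy : ∃ c, LDvd x c ∧ LDvd y c) : ∃ z ∈ Factors Δ ^ k, IsLcmL x y (x * z) := by
  induction k generalizing x y with
  | zero =>
    rw [pow_zero, Set.mem_one] at hy
    subst hy
    refine ⟨1, Set.one_mem_one, ?_⟩
    rw [mul_one]
    exact ⟨⟨1, (mul_one x).symm⟩, ⟨x, (one_mul x).symm⟩, fun _ h _ => h⟩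
  | succ k ih =>
    rw [pow_succ'] at hy
    obtain ⟨s, hs, y, hy, rfl⟩ := hy
    obtain ⟨c, hxc, u, rfl⟩ := hxy
    have hsc : LDvd s (s * y * u) := ⟨y * u, mul_assoc s y u⟩
    obtain ⟨q, hq, hxs⟩ :=
      exists_isLcmL_mul_factor hlcm hΔ.1 (mem_pow_lenFactors hΔ.2 x) hs ⟨_, hxc, hsc⟩
    obtain ⟨x₁, hx₁⟩ := hxs.2.1
    obtain ⟨v, hv⟩ := hxs.2.2 _ hxc hsc
    have hyx : y * u = x₁ * v := mul_left_cancel (by rw [← mul_assoc, hv, hx₁, mul_assoc])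
    obtain ⟨z, hz, hx₁y⟩ := ih hy ⟨_, ⟨v, hyx⟩, ⟨u, rfl⟩⟩
    refine ⟨q * z, pow_succ' (Factors Δ) k ▸ Set.mul_mem_mul hq hz, ?_⟩
    rw [← mul_assoc, hx₁, mul_assoc]
    refine ((hx₁y.mul_left s).symm.of_ldvd_iff fun c hc => ?_).symm
    rw [← hx₁]
    exact ⟨(ldvd_mul_right x q).trans, fun h => hxs.2.2 c h ((ldvd_mul_right s y).trans hc)⟩

theorem exists_eq_mul_of_ldvd_of_mem_pow [IsLeftCancelMul A] [Subsingleton Aˣ]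
    (hlcm : HasLcmsL A) (hΔ : IsGarsideElt Δ) {k : ℕ} {x y : A} (hy : y ∈ Factors Δ ^ k)
    (hxy : LDvd x y) : ∃ z ∈ Factors Δ ^ k, y = x * z := by
  obtain ⟨z, hz, hlcm⟩ :=
    exists_isLcmL_mul_of_mem_pow hlcm hΔ hy ⟨y, hxy, 1, (mul_one y).symm⟩
  obtain ⟨u, hu⟩ := hlcm.2.2 y hxy ⟨1, (mul_one y).symm⟩
  obtain ⟨v, hv⟩ := hlcm.2.1
  have hvu : v * u = 1 := mul_left_cancel (by rw [← mul_assoc, ← hv, ← hu, mul_one])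
  exact ⟨z, hz, by rw [hu, (IsUnit.of_mul_eq_one_right v hvu).eq_one, mul_one]⟩

theorem exists_isLcmR_mul_of_mem_pow [IsRightCancelMul A] (hlcm : HasLcmsR A)
    (hΔ : IsGarsideElt Δ) {k : ℕ} {x y : A} (hy : y ∈ Factors Δ ^ k)
    (hxy : ∃ c, RDvd x c ∧ RDvd y c) : ∃ z ∈ Factors Δ ^ k, IsLcmR x y (z * x) := by
  obtain ⟨c, hxc, hyc⟩ := hxy
  obtain ⟨z, hz, h⟩ := exists_isLcmL_mul_of_mem_pow hlcm.op hΔ.op (x := op x) (y := op y)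
    (by rwa [factors_op, op_mem_pow_preimage_iff]) ⟨op c, ldvd_op_iff.2 hxc, ldvd_op_iff.2 hyc⟩
  rw [← op_unop z, factors_op, op_mem_pow_preimage_iff] at hz
  exact ⟨unop z, hz, isLcmL_op_iff.1 (by rwa [op_mul, op_unop])⟩

theorem exists_eq_mul_of_rdvd_of_mem_pow [IsRightCancelMul A] [Subsingleton Aˣ]
    (hlcm : HasLcmsR A) (hΔ : IsGarsideElt Δ) {k : ℕ} {x y : A} (hy : y ∈ Factors Δ ^ k)
    (hxy : RDvd x y) : ∃ z ∈ Factors Δ ^ k, y = z * x := by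
  obtain ⟨z, hz, h⟩ := exists_eq_mul_of_ldvd_of_mem_pow hlcm.op hΔ.op (x := op x) (y := op y)
    (by rwa [factors_op, op_mem_pow_preimage_iff]) (ldvd_op_iff.2 hxy)
  rw [← op_unop z, factors_op, op_mem_pow_preimage_iff] at hz
  exact ⟨unop z, hz, op_injective (by rw [h, op_mul, op_unop])⟩

variable [IsCancelMul A] [Subsingleton Aˣ]

theorem mem_pow_of_ldvd_of_mem_pow (hL : HasLcmsL A) (hR : HasLcmsR A) (hΔ : IsGarsideElt Δ)
    {k : ℕ} {x y : A} (hy : y ∈ Factors Δ ^ k) (hxy : LDvd x y) : x ∈ Factors Δ ^ k := by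
  obtain ⟨z, hz, rfl⟩ := exists_eq_mul_of_ldvd_of_mem_pow hL hΔ hy hxy
  obtain ⟨w, hw, hwz⟩ := exists_eq_mul_of_rdvd_of_mem_pow hR hΔ hy (rdvd_mul_left x z)
  rwa [mul_right_cancel hwz]

theorem mem_pow_of_rdvd_of_mem_pow (hL : HasLcmsL A) (hR : HasLcmsR A) (hΔ : IsGarsideElt Δ)
    {k : ℕ} {x y : A} (hy : y ∈ Factors Δ ^ k) (hxy : RDvd x y) : x ∈ Factors Δ ^ k := by
  obtain ⟨z, hz, rfl⟩ := exists_eq_mul_of_rdvd_of_mem_pow hR hΔ hy hxy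
  obtain ⟨w, hw, hzw⟩ := exists_eq_mul_of_ldvd_of_mem_pow hL hΔ hy (ldvd_mul_right z x)
  rwa [mul_left_cancel hzw]

end Garside

section Parabolic

variable {A : Type*} [Monoid A]

theorem mem_pow_inter_of_isSpecial {N : Submonoid A} (hN : IsSpecial N) {S : Set A} {k : ℕ}
    {x : A} (hx : x ∈ S ^ k) (hxN : x ∈ N) : x ∈ (S ∩ N) ^ k := by
  induction k generalizing x with
  | zero => rwa [pow_zero] at hx ⊢
  | succ k ih =>
    rw [pow_succ'] at hx ⊢
    obtain ⟨s, hs, y, hy, rfl⟩ := hx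
    exact Set.mul_mem_mul ⟨hs, (hN s y hxN).1⟩ (ih hy (hN s y hxN).2)

theorem exists_mul_pow_eq_pow_mul {T : Set A} {D : A} (hT : ∀ y ∈ T, ∃ t ∈ T, D = y * t)
    (m : ℕ) {y : A} (hy : y ∈ T) : ∃ u ∈ T, y * D ^ m = D ^ m * u := by
  induction m generalizing y with
  | zero => exact ⟨y, hy, by rw [pow_zero, mul_one, one_mul]⟩
  | succ m ih =>
    obtain ⟨t, ht, hyt⟩ := hT y hy
    obtain ⟨u, hu, htu⟩ := hT t ht
    obtain ⟨v, hv, huv⟩ := ih hu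
    refine ⟨v, hv, ?_⟩
    calc y * D ^ (m + 1) = y * (t * u) * D ^ m := by rw [← htu, pow_succ', mul_assoc]
      _ = D * (u * D ^ m) := by rw [← mul_assoc y, ← hyt, mul_assoc]
      _ = D ^ (m + 1) * v := by rw [huv, ← mul_assoc, pow_succ']

theorem ldvd_pow_of_mem_pow {T : Set A} {D : A} (hT : ∀ y ∈ T, ∃ t ∈ T, D = y * t) {k : ℕ}
    {x : A} (hx : x ∈ T ^ k) : LDvd x (D ^ k) := by
  induction k generalizing x with
  | zero =>
    rw [pow_zero, Set.mem_one] at hx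
    exact ⟨1, by rw [hx, pow_zero, one_mul]⟩
  | succ k ih =>
    rw [pow_succ'] at hx
    obtain ⟨y, hy, z, hz, rfl⟩ := hx
    obtain ⟨t, ht, hyt⟩ := hT y hy
    obtain ⟨u, -, htu⟩ := exists_mul_pow_eq_pow_mul hT k ht
    obtain ⟨r, hr⟩ := ih hz
    refine ⟨r * u, ?_⟩
    calc D ^ (k + 1) = y * t * D ^ k := by rw [← hyt, pow_succ']
      _ = y * z * (r * u) := by rw [mul_assoc, htu, hr]; simp only [mul_assoc]

theorem rdvd_pow_of_mem_pow {T : Set A} {D : A} (hT : ∀ y ∈ T, ∃ t ∈ T, D = t * y) {k : ℕ}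
    {x : A} (hx : x ∈ T ^ k) : RDvd x (D ^ k) := by
  have hT' : ∀ y ∈ unop ⁻¹' T, ∃ t ∈ unop ⁻¹' T, op D = y * t := fun y hy =>
    let ⟨t, ht, h⟩ := hT (unop y) hy
    ⟨op t, ht, by rw [h, op_mul, op_unop]⟩
  rw [← ldvd_op_iff, op_pow]
  exact ldvd_pow_of_mem_pow hT' (op_mem_pow_preimage_iff.2 hx)

def leftDivisorsIn (N : Submonoid A) (D : A) : Set A := {b | b ∈ N ∧ ∃ c ∈ N, D = b * c}

variable {N : Submonoid A} {D : A}

theorem IsGarsideEltIn.exists_eq_mul_of_mem (h : IsGarsideEltIn N D) :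
    ∀ y ∈ leftDivisorsIn N D, ∃ t ∈ leftDivisorsIn N D, D = y * t :=
  fun y ⟨hy, t, ht, hyt⟩ => ⟨t, (Set.ext_iff.1 h.2.1 t).2 ⟨ht, y, hy, hyt⟩, hyt⟩

theorem IsGarsideEltIn.exists_eq_mul_of_mem' (h : IsGarsideEltIn N D) :
    ∀ y ∈ leftDivisorsIn N D, ∃ t ∈ leftDivisorsIn N D, D = t * y := fun y hy =>
  let ⟨hyN, t, ht, hty⟩ := (Set.ext_iff.1 h.2.1 y).1 hy
  ⟨t, ⟨ht, y, hyN, hty⟩, hty⟩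

theorem IsGarsideEltIn.factorsIn_subset (h : IsGarsideEltIn N D) :
    FactorsIn N D ⊆ leftDivisorsIn N D := by
  rintro y ⟨hy, c, hc, d, hd, hcyd⟩
  obtain ⟨-, e, he, hecy⟩ := (Set.ext_iff.1 h.2.1 (c * y)).1 ⟨N.mul_mem hc hy, d, hd, hcyd⟩
  exact (Set.ext_iff.1 h.2.1 y).2 ⟨hy, e * c, N.mul_mem he hc, by rw [hecy, mul_assoc]⟩

variable {Δ : A}

theorem ldvd_pow_of_mem_factors_pow (hN : IsSpecial N) (hD : IsGarsideEltIn N D)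
    (hsub : Factors Δ ∩ N ⊆ FactorsIn N D) {k : ℕ} {x : A} (hx : x ∈ Factors Δ ^ k)
    (hxN : x ∈ N) : LDvd x (D ^ k) :=
  ldvd_pow_of_mem_pow hD.exists_eq_mul_of_mem <|
    Set.pow_subset_pow_left (hsub.trans hD.factorsIn_subset)
      (mem_pow_inter_of_isSpecial hN hx hxN)

theorem rdvd_pow_of_mem_factors_pow (hN : IsSpecial N) (hD : IsGarsideEltIn N D)
    (hsub : Factors Δ ∩ N ⊆ FactorsIn N D) {k : ℕ} {x : A} (hx : x ∈ Factors Δ ^ k)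
    (hxN : x ∈ N) : RDvd x (D ^ k) :=
  rdvd_pow_of_mem_pow hD.exists_eq_mul_of_mem' <|
    Set.pow_subset_pow_left (hsub.trans hD.factorsIn_subset)
      (mem_pow_inter_of_isSpecial hN hx hxN)

end Parabolic

/-- **Lemma 4.2.** Let `M` be a Garside monoid with Garside element `Δ`, `N` a
parabolic submonoid, and `Δ_N` the Garside element of `N` with
`Div Δ_N = Div Δ ∩ N`. For `a, b ∈ M`, the sequence `(b ∧_L Δ_N^n)` stabilizes for
`n ≥ |b|`, and the sequence `(a ∧_R (Δ_N^n b))` stabilizes for `n ≥ |a|`. -/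
theorem lemma_4_2 {M : Type*} [Monoid M] (hM : IsPreGarside M) (Δ : M)
    (hΔ : IsGarsideElt Δ) (N : Submonoid M) (hN : IsParabolic N) (ΔN : M)
    (hΔN : IsGarsideEltIn N ΔN) (hdiv : FactorsIn N ΔN = Factors Δ ∩ (N : Set M))
    (a b : M) :
    (∀ n : ℕ, lenFactors Δ b ≤ n →
      ∀ d : M, IsGcdL b (ΔN ^ n) d ↔ IsGcdL b (ΔN ^ lenFactors Δ b) d) ∧
    ∀ n : ℕ, lenFactors Δ a ≤ n →
      ∀ d : M, IsGcdR a (ΔN ^ n * b) d ↔ IsGcdR a (ΔN ^ lenFactors Δ a * b) d := by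
  obtain ⟨hcanc, hatom, hL, hR⟩ := hM
  have : IsCancelMul M := hcanc.isCancelMul
  have : Subsingleton Mˣ := hatom.subsingleton_units
  have hsub : Factors Δ ∩ (N : Set M) ⊆ FactorsIn N ΔN := hdiv.ge
  refine ⟨fun n hn d => isGcdL_iff_of_ldvd_iff fun c hcb =>
      ⟨fun hc => ?_, fun hc => hc.trans (ldvd_pow_of_le ΔN hn)⟩,
    fun n hn d => isGcdR_iff_of_rdvd_iff fun c hca =>
      ⟨fun hc => ?_, fun hc => hc.trans ((rdvd_pow_of_le ΔN hn).mul_right b)⟩⟩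
  · obtain ⟨r, hr⟩ := hc
    have hcN : c ∈ N := (hN.1 c r (hr ▸ pow_mem hΔN.1 n)).1
    exact ldvd_pow_of_mem_factors_pow hN.1 hΔN hsub
      (mem_pow_of_ldvd_of_mem_pow hL hR hΔ (mem_pow_lenFactors hΔ.2 b) hcb) hcN
  · obtain ⟨z, hz, hlcm⟩ := exists_isLcmR_mul_of_mem_pow hR hΔ (x := b)
      (mem_pow_of_rdvd_of_mem_pow hL hR hΔ (mem_pow_lenFactors hΔ.2 a) hca)
      ⟨_, rdvd_mul_left _ b, hc⟩
    obtain ⟨δ, hδ⟩ := hlcm.2.2 _ (rdvd_mul_left _ b) hc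
    have hzN : z ∈ N := (hN.1 δ z (mul_right_cancel (hδ.trans (mul_assoc δ z b).symm) ▸
      pow_mem hΔN.1 n)).2
    exact hlcm.2.1.trans ((rdvd_pow_of_mem_factors_pow hN.1 hΔN hsub hz hzN).mul_right b)

end PG
end
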